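/- arXiv:0709.0089 — 2 statements merged into one kernel-verified Lean document; each statement's English description precedes it below -/
import Mathlib

section
/- Let p be an odd prime and q ∈ ℚ_p with |1 − q|_p < 1. For every continuous function f : ℤ_p → ℚ_p, the limit I_{−q}(f) exists in ℚ_p and satisfies q·I_{−q}(f₁) + I_{−q}(f) = [2]_q·f(0), where f₁(x) = f(x+1). -/
/-!
Write `S_N = ∑_{x < p^N} f(x) (-q)^x`. Splitting `x < p^{N+1}` as `x = a + p^N b` with `a < p^N`,
`b < p`, and using `(-q)^{p^N} = -q^{p^N}` and `∑_{b < p} (-1)^b = 1` (both because `p` is odd),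
`S_{N+1} - S_N` becomes a sum of terms `±((q^{p^N})^b f(a + p^N b) - f(a)) (-q)^a`. These are
uniformly small since `q^{p^N} → 1` and `f` is uniformly continuous, so in the nonarchimedean
field `ℚ_p` the sequence `S_N` is Cauchy; the normalising factor `(1 + q) / (1 - (-q)^{p^N})`
tends to `(1 + q) / 2`. The shift identity comes from `q S_N(f₁) + S_N(f) = f(0) - f(p^N) (-q)^{p^N}`,
whose right side tends to `2 f(0)`.
-/

open Filter Finset Topology

section Ultrametric

variable {R : Type*} [NormedRing R] [NormOneClass R] [IsUltrametricDist R]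

lemma norm_le_one_of_norm_sub_one_lt_one {x : R} (hx : ‖x - 1‖ < 1) : ‖x‖ ≤ 1 :=
  calc ‖x‖ = ‖(x - 1) + 1‖ := by rw [sub_add_cancel]
    _ ≤ max ‖x - 1‖ ‖(1 : R)‖ := IsUltrametricDist.norm_add_le_max _ _
    _ ≤ 1 := max_le hx.le norm_one.le

lemma norm_pow_sub_one_le {x : R} (hx : ‖x‖ ≤ 1) (n : ℕ) : ‖x ^ n - 1‖ ≤ ‖x - 1‖ := by
  rw [← geom_sum_mul]
  refine (norm_mul_le _ _).trans (mul_le_of_le_one_left (norm_nonneg _) ?_)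
  refine IsUltrametricDist.norm_sum_le_of_forall_le_of_nonneg zero_le_one fun i _ ↦ ?_
  exact (norm_pow_le x i).trans (pow_le_one₀ (norm_nonneg x) hx)

end Ultrametric

lemma Finset.sum_range_mul_eq_sum_sum {M : Type*} [AddCommMonoid M] (g : ℕ → M) (m n : ℕ) :
    ∑ x ∈ range (m * n), g x = ∑ b ∈ range m, ∑ a ∈ range n, g (a + n * b) := by
  induction m with
  | zero => simp
  | succ m ih =>
    rw [Nat.succ_mul, sum_range_add, ih, sum_range_succ]
    simp only [add_comm, mul_comm]

def fermionicSum {R : Type*} [CommRing R] (q : R) (f : ℕ → R) (n : ℕ) : R :=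
  ∑ x ∈ range n, f x * (-q) ^ x

section fermionicSum

variable {R : Type*} [CommRing R] (q : R) (f : ℕ → R)

lemma fermionicSum_shift (n : ℕ) :
    q * fermionicSum q (fun x ↦ f (x + 1)) n + fermionicSum q f n = f 0 - f n * (-q) ^ n := by
  have hshift : ∑ x ∈ range n, f (x + 1) * (-q) ^ (x + 1) =
      -(q * fermionicSum q (fun x ↦ f (x + 1)) n) := by
    rw [fermionicSum, mul_sum, ← sum_neg_distrib]
    exact sum_congr rfl fun x _ ↦ by ring
  have h₁ : fermionicSum q f (n + 1) = fermionicSum q f n + f n * (-q) ^ n := sum_range_succ _ _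
  have h₂ : fermionicSum q f (n + 1) = -(q * fermionicSum q (fun x ↦ f (x + 1)) n) + f 0 := by
    rw [fermionicSum, sum_range_succ', hshift, pow_zero, mul_one]
  linear_combination h₂ - h₁

lemma fermionicSum_mul_sub {m n : ℕ} (hm : Odd m) (hn : Odd n) :
    fermionicSum q f (m * n) - fermionicSum q f n =
      ∑ b ∈ range m, ∑ a ∈ range n, (-1) ^ b * ((q ^ n) ^ b * f (a + n * b) - f a) * (-q) ^ a := by
  have hS : fermionicSum q f n = ∑ b ∈ range m, ∑ a ∈ range n, (-1) ^ b * (f a * (-q) ^ a) := by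
    simp only [← mul_sum, ← sum_mul, neg_one_geom_sum, Nat.not_even_iff_odd.mpr hm, if_false,
      one_mul, fermionicSum]
  rw [hS, fermionicSum, sum_range_mul_eq_sum_sum, ← sum_sub_distrib]
  refine sum_congr rfl fun b _ ↦ ?_
  rw [← sum_sub_distrib]
  refine sum_congr rfl fun a _ ↦ ?_
  rw [pow_add, pow_mul, hn.neg_pow, neg_pow]
  ring

end fermionicSum

lemma norm_fermionicSum_mul_sub_le {K : Type*} [NormedField K] [IsUltrametricDist K]
    {q : K} {f : ℕ → K} {m n : ℕ} (hm : Odd m) (hn : Odd n) (hq : ‖q‖ ≤ 1) {M ε : ℝ}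
    (hf : ∀ x, ‖f x‖ ≤ M) (hqn : ‖q ^ n - 1‖ * M ≤ ε)
    (hfn : ∀ a b, ‖f (a + n * b) - f a‖ ≤ ε) :
    ‖fermionicSum q f (m * n) - fermionicSum q f n‖ ≤ ε := by
  have hε : 0 ≤ ε := (norm_nonneg _).trans (hfn 0 0)
  rw [fermionicSum_mul_sub q f hm hn]
  refine IsUltrametricDist.norm_sum_le_of_forall_le_of_nonneg hε fun b _ ↦
    IsUltrametricDist.norm_sum_le_of_forall_le_of_nonneg hε fun a _ ↦ ?_
  have hqnb : ‖(q ^ n) ^ b - 1‖ ≤ ‖q ^ n - 1‖ :=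
    norm_pow_sub_one_le (by simpa using pow_le_one₀ (norm_nonneg q) hq) b
  calc ‖(-1) ^ b * ((q ^ n) ^ b * f (a + n * b) - f a) * (-q) ^ a‖
      ≤ ‖(q ^ n) ^ b * f (a + n * b) - f a‖ := by
        simpa [norm_mul] using
          mul_le_of_le_one_right (norm_nonneg _) (pow_le_one₀ (norm_nonneg q) hq)
    _ = ‖((q ^ n) ^ b - 1) * f (a + n * b) + (f (a + n * b) - f a)‖ := by ring_nf
    _ ≤ max ‖((q ^ n) ^ b - 1) * f (a + n * b)‖ ‖f (a + n * b) - f a‖ :=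
        IsUltrametricDist.norm_add_le_max _ _
    _ ≤ ε := by
        refine max_le ?_ (hfn a b)
        rw [norm_mul]
        exact (mul_le_mul hqnb (hf _) (norm_nonneg _) (norm_nonneg _)).trans hqn

variable {p : ℕ} [Fact p.Prime]

namespace Padic

lemma norm_pow_prime_pow_sub_one_le {q : ℚ_[p]} (hq : ‖q - 1‖ < 1) (N : ℕ) :
    ‖q ^ p ^ N - 1‖ ≤ (p : ℝ)⁻¹ ^ (N + 1) := by
  set x : ℤ_[p] := ⟨q, norm_le_one_of_norm_sub_one_lt_one hq⟩
  have hx : (p : ℤ_[p]) ∣ x - 1 := (PadicInt.norm_lt_one_iff_dvd _).mp hq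
  obtain ⟨y, hy⟩ := dvd_sub_pow_of_dvd_sub hx N
  rw [one_pow] at hy
  calc ‖q ^ p ^ N - 1‖ = ‖x ^ p ^ N - 1‖ := rfl
    _ = ‖(p : ℤ_[p])‖ ^ (N + 1) * ‖y‖ := by rw [hy, norm_mul, norm_pow]
    _ ≤ (p : ℝ)⁻¹ ^ (N + 1) := by
      rw [PadicInt.norm_p]
      exact mul_le_of_le_one_right (by positivity) (PadicInt.norm_le_one y)

lemma tendsto_pow_prime_pow_nhds_one {q : ℚ_[p]} (hq : ‖q - 1‖ < 1) :
    Tendsto (fun N ↦ q ^ p ^ N) atTop (𝓝 1) := by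
  have hp : (p : ℝ)⁻¹ < 1 := inv_lt_one_of_one_lt₀ (mod_cast (Fact.out : p.Prime).one_lt)
  rw [tendsto_iff_norm_sub_tendsto_zero]
  refine squeeze_zero (fun _ ↦ norm_nonneg _) (norm_pow_prime_pow_sub_one_le hq) ?_
  exact (tendsto_pow_atTop_nhds_zero_of_lt_one (by positivity) hp).comp (tendsto_add_atTop_nat 1)

lemma tendsto_neg_pow_prime_pow_nhds_neg_one (hp : Odd p) {q : ℚ_[p]} (hq : ‖q - 1‖ < 1) :
    Tendsto (fun N ↦ (-q) ^ p ^ N) atTop (𝓝 (-1)) := by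
  simpa only [hp.pow.neg_pow] using (tendsto_pow_prime_pow_nhds_one hq).neg

end Padic

lemma PadicInt.tendsto_prime_pow_nhds_zero : Tendsto (fun N ↦ (p : ℤ_[p]) ^ N) atTop (𝓝 0) :=
  tendsto_pow_atTop_nhds_zero_of_norm_lt_one ((PadicInt.norm_lt_one_iff_dvd (p := p) _).mpr dvd_rfl)

lemma PadicInt.tendstoUniformly_comp_add_prime_pow_mul {E : Type*} [UniformSpace E]
    {f : ℤ_[p] → E} (hf : Continuous f) :
    TendstoUniformly (fun N (z : ℤ_[p] × ℤ_[p]) ↦ f (z.1 + p ^ N * z.2)) (fun z ↦ f z.1) atTop := by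
  refine (CompactSpace.uniformContinuous_of_continuous hf).comp_tendstoUniformly ?_
  rw [Metric.tendstoUniformly_iff]
  intro ε hε
  have hpN := tendsto_zero_iff_norm_tendsto_zero.mp (PadicInt.tendsto_prime_pow_nhds_zero (p := p))
  filter_upwards [hpN.eventually_lt_const hε] with N hN z
  calc dist z.1 (z.1 + p ^ N * z.2) = ‖(p : ℤ_[p]) ^ N * z.2‖ := by
        rw [dist_eq_norm, sub_add_cancel_left, norm_neg]
    _ ≤ ‖(p : ℤ_[p]) ^ N‖ := by
        rw [norm_mul]; exact mul_le_of_le_one_right (norm_nonneg _) (PadicInt.norm_le_one _)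
    _ < ε := by simpa using hN

lemma tendsto_fermionicSum_prime_pow_succ_sub (hp : Odd p) {q : ℚ_[p]} (hq : ‖q - 1‖ < 1)
    {f : ℤ_[p] → ℚ_[p]} (hf : Continuous f) :
    Tendsto (fun N ↦ fermionicSum q (fun x : ℕ ↦ f x) (p ^ (N + 1)) -
      fermionicSum q (fun x : ℕ ↦ f x) (p ^ N)) atTop (𝓝 0) := by
  obtain ⟨M, hM⟩ := isCompact_univ.exists_bound_of_continuousOn hf.continuousOn
  rw [NormedAddGroup.tendsto_nhds_zero]
  intro ε hε
  have hq_pow : ∀ᶠ N in atTop, ‖q ^ p ^ N - 1‖ * M < ε / 2 := by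
    have := ((Padic.tendsto_pow_prime_pow_nhds_one hq).sub_const 1).norm.mul_const M
    rw [sub_self, norm_zero, zero_mul] at this
    exact this.eventually_lt_const (half_pos hε)
  have hf_unif := Metric.tendstoUniformly_iff.mp
    (PadicInt.tendstoUniformly_comp_add_prime_pow_mul hf) (ε / 2) (half_pos hε)
  filter_upwards [hq_pow, hf_unif] with N hqN hfN
  rw [pow_succ']
  refine (norm_fermionicSum_mul_sub_le hp hp.pow (norm_le_one_of_norm_sub_one_lt_one hq)
    (fun x ↦ hM x trivial) hqN.le fun a b ↦ ?_).trans_lt (half_lt_self hε)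
  have := hfN (a, b)
  rw [dist_comm, dist_eq_norm] at this
  push_cast
  exact this.le

lemma exists_tendsto_fermionicSum (hp : Odd p) {q : ℚ_[p]} (hq : ‖q - 1‖ < 1)
    {f : ℤ_[p] → ℚ_[p]} (hf : Continuous f) :
    ∃ L, Tendsto (fun N ↦ fermionicSum q (fun x : ℕ ↦ f x) (p ^ N)) atTop (𝓝 L) :=
  cauchySeq_tendsto_of_complete <| NonarchimedeanAddGroup.cauchySeq_of_tendsto_sub_nhds_zero <|
    tendsto_fermionicSum_prime_pow_succ_sub hp hq hf

lemma tendsto_fermionicSum_shift (hp : Odd p) {q : ℚ_[p]} (hq : ‖q - 1‖ < 1)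
    {f : ℤ_[p] → ℚ_[p]} (hf : Continuous f) :
    Tendsto (fun N ↦ q * fermionicSum q (fun x : ℕ ↦ f (x + 1)) (p ^ N) +
      fermionicSum q (fun x : ℕ ↦ f x) (p ^ N)) atTop (𝓝 (2 * f 0)) := by
  have hshift : ∀ N, q * fermionicSum q (fun x : ℕ ↦ f (x + 1)) (p ^ N) +
      fermionicSum q (fun x : ℕ ↦ f x) (p ^ N) = f 0 - f ((p : ℤ_[p]) ^ N) * (-q) ^ p ^ N := by
    intro N
    have := fermionicSum_shift q (fun x : ℕ ↦ f x) (p ^ N)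
    push_cast at this
    exact this
  have hlim : Tendsto (fun N ↦ f 0 - f ((p : ℤ_[p]) ^ N) * (-q) ^ p ^ N) atTop
      (𝓝 (f 0 - f 0 * -1)) :=
    tendsto_const_nhds.sub (((hf.tendsto 0).comp PadicInt.tendsto_prime_pow_nhds_zero).mul
      (Padic.tendsto_neg_pow_prime_pow_nhds_neg_one hp hq))
  rw [mul_neg_one, sub_neg_eq_add, ← two_mul] at hlim
  simpa only [hshift] using hlim

/-- For an odd prime `p`, `q ∈ ℚ_p` with `|1-q|_p < 1`, and continuous `f : ℤ_p → ℚ_p`,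
the fermionic `p`-adic `q`-integral
`I₋q(f) = lim_N (1/[p^N]₋q) ∑_{x=0}^{p^N-1} f(x)(-q)^x` exists (here
`1/[p^N]₋q = (1+q)/(1-(-q)^{p^N})`), and `q·I₋q(f₁) + I₋q(f) = [2]_q f(0)`
where `f₁(x) = f(x+1)` and `[2]_q = 1 + q`. -/
theorem fermionic_q_integral_exists_and_shift (p : ℕ) [Fact (Nat.Prime p)] (hp : Odd p)
    (q : ℚ_[p]) (hq : ‖1 - q‖ < 1)
    (f : ℤ_[p] → ℚ_[p]) (hf : Continuous f) :
    ∃ I I₁ : ℚ_[p],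
      Tendsto (fun N : ℕ =>
          ((1 + q) / (1 - (-q) ^ (p ^ N))) * ∑ x ∈ range (p ^ N), f (x : ℤ_[p]) * (-q) ^ x)
        atTop (nhds I) ∧
      Tendsto (fun N : ℕ =>
          ((1 + q) / (1 - (-q) ^ (p ^ N))) * ∑ x ∈ range (p ^ N), f ((x : ℤ_[p]) + 1) * (-q) ^ x)
        atTop (nhds I₁) ∧
      q * I₁ + I = (1 + q) * f 0 := by
  rw [norm_sub_rev] at hq
  obtain ⟨L, hL⟩ := exists_tendsto_fermionicSum hp hq hf
  obtain ⟨L₁, hL₁⟩ := exists_tendsto_fermionicSum hp hq (hf.comp (continuous_add_const 1))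
  have hc : Tendsto (fun N ↦ (1 + q) / (1 - (-q) ^ p ^ N)) atTop (𝓝 ((1 + q) / (1 - -1))) :=
    tendsto_const_nhds.div
      (tendsto_const_nhds.sub (Padic.tendsto_neg_pow_prime_pow_nhds_neg_one hp hq)) (by norm_num)
  rw [sub_neg_eq_add, one_add_one_eq_two] at hc
  have hshift : q * L₁ + L = 2 * f 0 :=
    tendsto_nhds_unique ((hL₁.const_mul q).add hL) (tendsto_fermionicSum_shift hp hq hf)
  refine ⟨(1 + q) / 2 * L, (1 + q) / 2 * L₁, hc.mul hL, hc.mul hL₁, ?_⟩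
  linear_combination (1 + q) / 2 * hshift
end

section
/- Let q ∈ ℂ with |q| < 1 and x ∈ ℂ. The function F_q(t,x) = [2]_q·e^{xt}/(q e^t + 1) is infinitely differentiable on a neighborhood of t = 0 (on which q e^t + 1 ≠ 0), and for every n ≥ 0 its n-th derivative in t at t = 0 equals the q-Euler polynomial E_{n,q}(x) = Σ_{k=0}^{n} C(n,k)·E_{k,q}·x^{n−k}. In particular, for x = 0 the n-th derivative of [2]_q/(q e^t + 1) at t = 0 equals E_{n,q}. -/
/-!
The q-Euler numbers are determined by `E₀ = 1` and their recurrence as soon as `1 + q ≠ 0`, so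
it suffices to show that the Taylor coefficients `gₙ` of `G(t) = [2]_q/(q e^t + 1)` at `0` satisfy
it. Differentiating `q · (G(t) e^t) + G(t) = [2]_q` `m ≥ 1` times at `0`, Leibniz's rule turns
the left side into `q ∑ C(m,k) g_k + g_m`. The same rule applied to `G(t) e^{xt}` gives the
q-Euler polynomials.
-/

open Finset Topology Complex

def IsQEulerNumbers {K : Type*} [Field K] (q : K) (E : ℕ → K) : Prop :=
  E 0 = 1 ∧ ∀ m : ℕ, 1 ≤ m → q * ∑ k ∈ range (m + 1), (m.choose k : K) * E k + E m = 0

namespace IsQEulerNumbers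

variable {K : Type*} [Field K] {q : K} {E E' : ℕ → K}

theorem one_add_mul_succ (hE : IsQEulerNumbers q E) (m : ℕ) :
    (1 + q) * E (m + 1) = -(q * ∑ k ∈ range (m + 1), ((m + 1).choose k : K) * E k) := by
  have h := hE.2 (m + 1) (Nat.le_add_left 1 m)
  rw [sum_range_succ, Nat.choose_self, Nat.cast_one, one_mul] at h
  linear_combination h

theorem unique (hq : 1 + q ≠ 0) (hE : IsQEulerNumbers q E) (hE' : IsQEulerNumbers q E') :
    E = E' := by
  funext n
  induction n using Nat.strong_induction_on with
  | _ n ih =>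
    match n with
    | 0 => rw [hE.1, hE'.1]
    | m + 1 =>
      have hsum : ∑ k ∈ range (m + 1), ((m + 1).choose k : K) * E k
          = ∑ k ∈ range (m + 1), ((m + 1).choose k : K) * E' k :=
        sum_congr rfl fun k hk => by rw [ih k (mem_range.mp hk)]
      apply mul_left_cancel₀ hq
      rw [hE.one_add_mul_succ, hE'.one_add_mul_succ, hsum]

end IsQEulerNumbers

theorem iteratedDeriv_mul_cexp_const_mul_zero {f : ℂ → ℂ} {n : ℕ} (hf : ContDiffAt ℂ n f 0)
    (x : ℂ) :
    iteratedDeriv n (fun t => f t * exp (x * t)) 0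
      = ∑ k ∈ range (n + 1), (n.choose k : ℂ) * iteratedDeriv k f 0 * x ^ (n - k) := by
  rw [iteratedDeriv_fun_mul hf (by fun_prop)]
  simp [iteratedDeriv_cexp_const_mul]

theorem isQEulerNumbers_iteratedDeriv {q : ℂ} (hq : 1 + q ≠ 0) :
    IsQEulerNumbers q fun n => iteratedDeriv n (fun t => (1 + q) / (q * exp t + 1)) 0 := by
  set G : ℂ → ℂ := fun t => (1 + q) / (q * exp t + 1)
  have hD0 : q * exp 0 + 1 ≠ 0 := by rwa [exp_zero, mul_one, add_comm]
  have hG (n : ℕ) : ContDiffAt ℂ n G 0 := contDiffAt_const.div (by fun_prop) hD0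
  refine ⟨by simp [G, add_comm q, hq], fun m hm => ?_⟩
  have hfun : (fun t => q * (G t * exp (1 * t)) + G t) =ᶠ[𝓝 0] fun _ => 1 + q := by
    have hD : ∀ᶠ t in 𝓝 0, q * exp t + 1 ≠ 0 :=
      (by fun_prop : Continuous fun t => q * exp t + 1).continuousAt.eventually_ne hD0
    filter_upwards [hD] with t ht
    simp only [G, one_mul]
    field_simp
  have h := hfun.iteratedDeriv_eq m
  rw [iteratedDeriv_fun_add (by fun_prop) (hG m), iteratedDeriv_const_mul_field,
    iteratedDeriv_mul_cexp_const_mul_zero (hG m), iteratedDeriv_const,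
    if_neg (by omega)] at h
  simpa using h

/-- For `q ∈ ℂ` with `|q| < 1` and `x ∈ ℂ`, the function
`F_q(t,x) = [2]_q e^{xt}/(q e^t + 1)` is infinitely differentiable on a neighborhood of `t = 0`
on which `q e^t + 1 ≠ 0`, and its `n`-th derivative at `t = 0` equals the `q`-Euler polynomial
`E_{n,q}(x) = ∑_{k=0}^n C(n,k) E_{k,q} x^{n-k}`; in particular for `x = 0` the `n`-th
derivative of `[2]_q/(q e^t + 1)` at `0` is `E_{n,q}`. -/
theorem q_euler_polynomial_generating_function (q : ℂ) (hq : ‖q‖ < 1) (x : ℂ)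
    (E : ℕ → ℂ) (hE0 : E 0 = 1)
    (hE : ∀ m : ℕ, 1 ≤ m →
      q * ∑ k ∈ range (m + 1), (m.choose k : ℂ) * E k + E m = 0) :
    ∃ U : Set ℂ, IsOpen U ∧ (0 : ℂ) ∈ U ∧
      (∀ t ∈ U, q * Complex.exp t + 1 ≠ 0) ∧
      ContDiffOn ℂ ⊤ (fun t => (1 + q) * Complex.exp (x * t) / (q * Complex.exp t + 1)) U ∧
      (∀ n : ℕ,
        iteratedDeriv n (fun t => (1 + q) * Complex.exp (x * t) / (q * Complex.exp t + 1)) 0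
          = ∑ k ∈ range (n + 1), (n.choose k : ℂ) * E k * x ^ (n - k)) ∧
      (∀ n : ℕ,
        iteratedDeriv n (fun t => (1 + q) / (q * Complex.exp t + 1)) 0 = E n) := by
  have hq1 : 1 + q ≠ 0 := fun h => by simp [eq_neg_of_add_eq_zero_right h] at hq
  have hD0 : q * exp 0 + 1 ≠ 0 := by rwa [exp_zero, mul_one, add_comm]
  have hG : ∀ n, iteratedDeriv n (fun t => (1 + q) / (q * exp t + 1)) 0 = E n :=
    congrFun ((isQEulerNumbers_iteratedDeriv hq1).unique hq1 ⟨hE0, hE⟩)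
  have hU : IsOpen {t : ℂ | q * exp t + 1 ≠ 0} := isOpen_ne_fun (by fun_prop) (by fun_prop)
  refine ⟨_, hU, hD0, fun t ht => ht,
    fun t ht => ContDiffAt.contDiffWithinAt (by fun_prop (disch := exact ht)), fun n => ?_, hG⟩
  have hF : (fun t => (1 + q) * exp (x * t) / (q * exp t + 1))
      = fun t => (1 + q) / (q * exp t + 1) * exp (x * t) := by
    funext t
    ring
  rw [hF, iteratedDeriv_mul_cexp_const_mul_zero (by fun_prop (disch := exact hD0))]
  simp only [hG]
end
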